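/- arXiv:1309.2323 — 8 statements merged into one kernel-verified Lean document; each statement's English description precedes it below -/
import Mathlib

section
/- Let p be a prime and n ≥ 1 an integer. Then the Newton polynomial N_{pn} satisfies N_{pn}(t_1, …, t_{pn}) ≡ N_n(t_1, …, t_n)^p modulo p in ℤ[t_1, …, t_{pn}]; equivalently, the images of N_{pn}(t_1, …, t_{pn}) and of N_n(t_1, …, t_n)^p in the polynomial ring (ℤ/p)[t_1, …, t_{pn}] coincide. -/
/-!
Substituting the elementary symmetric polynomials `e_i` of `m` variables for `t_i` turns the
recursion defining `N_k` into Newton's identities, so `N_k(e_1, …, e_k)` is the power sum `p_k`.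
Over `ℤ/p` we have `p_{pn} = p_n ^ p` by the Frobenius, and since `e_1, …, e_m` are
algebraically independent, polynomials in `t_1, …, t_m` are determined by their value at
`(e_1, …, e_m)`. Taking `m = pn` gives `N_{pn} = N_n ^ p` over `ℤ/p`, and reduction mod `p`
commutes with forming `N_k`.
-/

open MvPolynomial

/-- The Newton polynomials `N_n ∈ R[t_1, …, t_n]`, defined recursively by
`N_1(t) = t_1` and
`N_n(t) = t_1 N_{n−1}(t) − t_2 N_{n−2}(t) + ⋯ + (−1)^{n−2} t_{n−1} N_1(t) + (−1)^{n−1} n t_n`.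
The variable `t_m` is `X m`. -/
noncomputable def newton (R : Type*) [CommRing R] : ℕ → MvPolynomial ℕ R
  | 0 => 0
  | (n+1) =>
      (∑ i ∈ Finset.range n, (-1 : MvPolynomial ℕ R)^i * X (i+1) * newton R (n - i))
      + (-1 : MvPolynomial ℕ R)^n * ((n+1 : ℕ) : MvPolynomial ℕ R) * X (n+1)
  decreasing_by exact Nat.lt_succ_of_le (Nat.sub_le n i)

lemma map_newton {R S : Type*} [CommRing R] [CommRing S] (f : R →+* S) (k : ℕ) :
    map f (newton R k) = newton S k := by
  induction k using Nat.strong_induction_on with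
  | _ k ih =>
    cases k with
    | zero => simp [newton]
    | succ n =>
      rw [newton, newton]
      simp only [map_add, map_sum, map_mul, map_pow, map_neg, map_one, map_natCast, map_X]
      congr 1
      exact Finset.sum_congr rfl fun i _ => by rw [ih (n - i) (by omega)]

lemma newton_mem_supported (R : Type*) [CommRing R] (k : ℕ) :
    newton R k ∈ supported R (Set.Icc 1 k) := by
  induction k using Nat.strong_induction_on with
  | _ k ih =>
    cases k with
    | zero => simp [newton]
    | succ n =>
      have hX : ∀ i, 1 ≤ i → i ≤ n + 1 → X i ∈ supported R (Set.Icc 1 (n + 1)) :=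
        fun i h₁ h₂ => Algebra.subset_adjoin (Set.mem_image_of_mem X ⟨h₁, h₂⟩)
      have hsign : ∀ i, (-1 : MvPolynomial ℕ R) ^ i ∈ supported R (Set.Icc 1 (n + 1)) :=
        fun i => pow_mem (neg_mem (one_mem _)) i
      rw [newton]
      refine add_mem (sum_mem fun i hi => mul_mem (mul_mem (hsign i) ?_) ?_) ?_
      · exact hX (i + 1) (by omega) (by simp at hi; omega)
      · exact supported_mono (Set.Icc_subset_Icc_right (by omega)) (ih (n - i) (by omega))
      · exact mul_mem (mul_mem (hsign n) (natCast_mem _ _)) (hX (n + 1) (by omega) le_rfl)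

lemma range_rename_eq_supported {σ τ : Type*} (R : Type*) [CommSemiring R] (f : σ → τ) :
    (rename (R := R) f).range = supported R (Set.range f) := by
  rw [supported, ← Set.range_comp, Algebra.adjoin_range_eq_range_aeval, rename_eq_aeval]

lemma injOn_aeval_esymm {σ : Type*} [Fintype σ] (R : Type*) [CommRing R] {n : ℕ}
    (hn : n ≤ Fintype.card σ) :
    Set.InjOn (aeval fun i => esymm σ R i)
      (supported R (Set.Icc 1 n) : Set (MvPolynomial ℕ R)) := by
  have hrange : Set.range (fun j : Fin n => (j : ℕ) + 1) = Set.Icc 1 n := by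
    ext i
    simp only [Set.mem_range, Fin.exists_iff, Set.mem_Icc]
    exact ⟨fun ⟨j, hj, hji⟩ => by omega, fun h => ⟨i - 1, by omega, by omega⟩⟩
  rw [← hrange, ← range_rename_eq_supported]
  rintro _ ⟨a, rfl⟩ _ ⟨b, rfl⟩ hab
  simp only [AlgHom.toRingHom_eq_coe, RingHom.coe_coe] at hab ⊢
  rw [aeval_rename, aeval_rename] at hab
  refine congrArg _ (esymmAlgHom_injective R hn (Subtype.ext ?_))
  rw [esymmAlgHom_apply, esymmAlgHom_apply]
  exact hab

open Finset in
lemma aeval_esymm_newton (σ : Type*) [Fintype σ] (R : Type*) [CommRing R] {k : ℕ} (hk : 0 < k) :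
    aeval (fun i => esymm σ R i) (newton R k) = psum σ R k := by
  induction k using Nat.strong_induction_on with
  | _ k ih =>
    obtain ⟨n, rfl⟩ : ∃ n, k = n + 1 := ⟨k - 1, by omega⟩
    have hsum : ∑ i ∈ range n, (-1) ^ (i + 1) * esymm σ R (i + 1) * psum σ R (n - i) =
        ∑ a ∈ antidiagonal (n + 1) with a.1 ∈ Set.Ioo 0 (n + 1),
          (-1) ^ a.1 * esymm σ R a.1 * psum σ R a.2 := by
      refine sum_nbij' (fun i => (i + 1, n - i)) (fun a => a.1 - 1) ?_ ?_ ?_ ?_ fun _ _ => rfl <;>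
        simp +contextual <;> omega
    have hpsum : ∀ i ∈ range n, (-1) ^ i * esymm σ R (i + 1) *
        aeval (fun i => esymm σ R i) (newton R (n - i)) =
          (-1) ^ i * esymm σ R (i + 1) * psum σ R (n - i) := fun i hi => by
      rw [ih (n - i) (by omega) (by simp at hi; omega)]
    rw [psum_eq_mul_esymm_sub_sum σ R (n + 1) (by omega), ← hsum, newton]
    simp only [map_add, map_sum, map_mul, map_pow, map_neg, map_one, map_natCast, aeval_X]
    rw [sum_congr rfl hpsum]
    simp only [pow_succ, mul_neg_one, neg_mul, sum_neg_distrib]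
    ring

lemma psum_mul_eq_psum_pow (σ : Type*) [Fintype σ] {R : Type*} [CommSemiring R] (p : ℕ)
    [ExpChar R p] (n : ℕ) : psum σ R (p * n) = psum σ R n ^ p := by
  simp only [psum, sum_pow_char, ← pow_mul, mul_comm]

/-- For a prime `p` and `n ≥ 1`, `N_{pn} ≡ N_n^p (mod p)`, i.e. the images of
`N_{pn}(t_1,…,t_{pn})` and `N_n(t_1,…,t_n)^p` in `(ℤ/p)[t_1,t_2,…]` coincide. -/
theorem newton_pn_congr_pow_p (p : ℕ) (hp : p.Prime) (n : ℕ) (hn : 1 ≤ n) :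
    MvPolynomial.map (Int.castRingHom (ZMod p)) (newton ℤ (p * n)) =
      MvPolynomial.map (Int.castRingHom (ZMod p)) ((newton ℤ n) ^ p) := by
  have : Fact p.Prime := ⟨hp⟩
  rw [map_newton, map_pow, map_newton]
  have hnm : n ≤ p * n := Nat.le_mul_of_pos_left n hp.pos
  refine injOn_aeval_esymm (σ := Fin (p * n)) (ZMod p) (Fintype.card_fin _).ge
    (newton_mem_supported _ _)
    (pow_mem (supported_mono (Set.Icc_subset_Icc_right hnm) (newton_mem_supported _ _)) p) ?_
  rw [map_pow, aeval_esymm_newton _ _ (by omega), aeval_esymm_newton _ _ hn, psum_mul_eq_psum_pow]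
end

section
/- Let p be a prime, s ≥ 1, and n ≥ 1, with base-p digits n_i of n and k the smallest index with n_k ≠ 0. Then the binomial coefficient C(np^s − 1, n) is not divisible by p if and only if n_{s+k} ≤ n_k − 1 and n_{s+k+i} ≤ n_{k+i} for every i ≥ 1. -/
/-! By Lucas' theorem, `p ∤ C(m, n)` iff every base-`p` digit of `n` is at most the corresponding
digit of `m`. Write `n = t p^k` with `p ∤ t`; then `n p^s - 1 = (t - 1) p^(s+k) + (p^(s+k) - 1)`.
So the digits of `m = n p^s - 1` below `s + k` are all `p - 1`, its digit at `s + k` is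
`t % p - 1 = n_k - 1`, and, because `p ∤ t`, the higher digits of `t - 1` are those of `t`,
giving `m_{s+k+i} = n_{k+i}` for `i ≥ 1`. -/

namespace Nat

variable {p t i j : ℕ}

lemma mul_sub_one_eq_sub_one_add_sub_one_mul (ht : 0 < t) (hp : 0 < p) :
    t * p - 1 = (p - 1) + (t - 1) * p := by
  have := Nat.le_mul_of_pos_left p ht
  rw [Nat.sub_one_mul]
  omega

lemma mul_sub_one_div_right (ht : 0 < t) (hp : 0 < p) : (t * p - 1) / p = t - 1 := by
  rw [mul_sub_one_eq_sub_one_add_sub_one_mul ht hp, Nat.add_mul_div_right _ _ hp,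
    Nat.div_eq_of_lt (by omega), zero_add]

lemma mul_sub_one_mod_right (ht : 0 < t) : (t * p - 1) % p = p - 1 := by
  rcases Nat.eq_zero_or_pos p with rfl | hp
  · simp
  rw [mul_sub_one_eq_sub_one_add_sub_one_mul ht hp, Nat.add_mul_mod_self_right,
    Nat.mod_eq_of_lt (by omega)]

lemma sub_one_mod_of_not_dvd (h : ¬ p ∣ t) : (t - 1) % p = t % p - 1 := by
  rcases Nat.eq_zero_or_pos p with rfl | hp
  · simp
  have hr : t % p ≠ 0 := fun h0 => h (Nat.dvd_of_mod_eq_zero h0)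
  have hdm := Nat.div_add_mod t p
  have : t - 1 = (t % p - 1) + p * (t / p) := by omega
  rw [this, Nat.add_mul_mod_self_left, Nat.mod_eq_of_lt (by have := Nat.mod_lt t hp; omega)]

lemma sub_one_div_pow_of_not_dvd (h : ¬ p ∣ t) (hi : 1 ≤ i) : (t - 1) / p ^ i = t / p ^ i := by
  obtain ⟨i, rfl⟩ := Nat.exists_eq_add_of_le' hi
  obtain ⟨u, rfl⟩ : ∃ u, t = u + 1 := Nat.exists_eq_add_one.mpr
    (Nat.pos_of_ne_zero fun h0 => h (h0 ▸ dvd_zero p))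
  rw [pow_succ', ← Nat.div_div_eq_div_mul, ← Nat.div_div_eq_div_mul, Nat.succ_div_of_not_dvd h,
    Nat.add_sub_cancel]

lemma mul_pow_sub_one_div_pow_mod_of_lt (hp : 0 < p) (ht : 0 < t) (hij : i < j) :
    (t * p ^ j - 1) / p ^ i % p = p - 1 := by
  have hsplit : t * p ^ j = t * p ^ (j - i - 1) * p * p ^ i := by
    rw [mul_assoc, mul_assoc, ← pow_succ', ← pow_add]; congr 2; omega
  rw [hsplit, mul_sub_one_div_right (by positivity) (by positivity),
    mul_sub_one_mod_right (by positivity)]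

lemma mul_pow_sub_one_div_pow_add (hp : 0 < p) (ht : 0 < t) :
    (t * p ^ j - 1) / p ^ (j + i) = (t - 1) / p ^ i := by
  rw [pow_add, ← Nat.div_div_eq_div_mul, mul_sub_one_div_right ht (by positivity)]

lemma pow_dvd_of_forall_lt_div_pow_mod_eq_zero {n k : ℕ} (h : ∀ i < k, n / p ^ i % p = 0) :
    p ^ k ∣ n := by
  induction k with
  | zero => simp
  | succ k ih =>
    have hk : p ^ k ∣ n := ih fun i hi => h i (by omega)
    rw [pow_succ, ← Nat.dvd_div_iff_mul_dvd hk]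
    exact Nat.dvd_of_mod_eq_zero (h k k.lt_succ_self)

lemma Prime.not_dvd_choose_iff_le_of_lt (hp : p.Prime) {d e : ℕ} (hd : d < p) :
    ¬ p ∣ d.choose e ↔ e ≤ d :=
  ⟨fun h => not_lt.mp fun he => h (by rw [Nat.choose_eq_zero_of_lt he]; exact dvd_zero p),
    fun he => hp.coprime_iff_not_dvd.mp (hp.coprime_choose_of_lt hd he)⟩

lemma Prime.not_dvd_choose_iff_forall_div_pow_mod_le (hp : p.Prime) (m n : ℕ) :
    ¬ p ∣ m.choose n ↔ ∀ i, n / p ^ i % p ≤ m / p ^ i % p := by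
  have := Fact.mk hp
  set a := m + n + 1
  have hm : m < p ^ a := (show m < a by omega).trans (Nat.lt_pow_self hp.one_lt)
  have hn : n < p ^ a := (show n < a by omega).trans (Nat.lt_pow_self hp.one_lt)
  rw [Nat.dvd_iff_mod_eq_zero, Choose.choose_modEq_prod_range_choose_nat hm hn,
    ← Nat.dvd_iff_mod_eq_zero, Prime.dvd_finsetProd_iff hp.prime]
  push Not
  simp only [Finset.mem_range, hp.not_dvd_choose_iff_le_of_lt (Nat.mod_lt _ hp.pos)]
  refine ⟨fun h i => ?_, fun h i _ => h i⟩
  by_cases hi : i < a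
  · exact h i hi
  · rw [Nat.div_eq_of_lt (hn.trans_le (Nat.pow_le_pow_right hp.pos (not_lt.mp hi)))]
    simp

lemma forall_iff_forall_lt_and_forall_add {P : ℕ → Prop} (j : ℕ) :
    (∀ i, P i) ↔ (∀ i < j, P i) ∧ P j ∧ ∀ i, 1 ≤ i → P (j + i) := by
  refine ⟨fun h => ⟨fun i _ => h i, h j, fun i _ => h (j + i)⟩, fun ⟨hlt, hj, hgt⟩ i => ?_⟩
  rcases lt_trichotomy i j with hij | rfl | hij
  · exact hlt i hij
  · exact hj
  · simpa [Nat.add_sub_cancel' hij.le] using hgt (i - j) (by omega)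

end Nat

theorem not_dvd_choose_iff_digits_general (p : ℕ) (hp : p.Prime) (s n : ℕ) (k : ℕ)
    (hk0 : ∀ i < k, n / p ^ i % p = 0) (hk1 : n / p ^ k % p ≠ 0) :
    ¬ p ∣ Nat.choose (n * p ^ s - 1) n ↔
      (n / p ^ (s + k) % p ≤ n / p ^ k % p - 1 ∧
        ∀ i, 1 ≤ i → n / p ^ (s + k + i) % p ≤ n / p ^ (k + i) % p) := by
  set t := n / p ^ k
  have ht : ¬ p ∣ t := fun h => hk1 (Nat.mod_eq_zero_of_dvd h)
  have ht0 : 0 < t := Nat.pos_of_ne_zero fun h => ht (h ▸ dvd_zero p)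
  have hm : n * p ^ s - 1 = t * p ^ (s + k) - 1 := by
    rw [pow_add, ← mul_assoc, mul_right_comm, Nat.div_mul_cancel
      (Nat.pow_dvd_of_forall_lt_div_pow_mod_eq_zero hk0)]
  rw [hp.not_dvd_choose_iff_forall_div_pow_mod_le, hm,
    Nat.forall_iff_forall_lt_and_forall_add (s + k)]
  have hlow : ∀ i < s + k, n / p ^ i % p ≤ (t * p ^ (s + k) - 1) / p ^ i % p := fun i hi => by
    rw [Nat.mul_pow_sub_one_div_pow_mod_of_lt hp.pos ht0 hi]
    exact Nat.le_sub_one_of_lt (Nat.mod_lt _ hp.pos)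
  have hhigh : ∀ i, 1 ≤ i → (t * p ^ (s + k) - 1) / p ^ (s + k + i) = n / p ^ (k + i) := by
    intro i hi
    rw [Nat.mul_pow_sub_one_div_pow_add hp.pos ht0, Nat.sub_one_div_pow_of_not_dvd ht hi,
      pow_add, Nat.div_div_eq_div_mul]
  have hmid : (t * p ^ (s + k) - 1) / p ^ (s + k) % p = t % p - 1 := by
    rw [Nat.mul_sub_one_div_right ht0 (pow_pos hp.pos _), Nat.sub_one_mod_of_not_dvd ht]
  rw [hmid, iff_true_intro hlow, true_and]
  exact and_congr_right' (forall₂_congr fun i hi => by rw [hhigh i hi])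

/-- Let `p` be prime, `s ≥ 1`, `n ≥ 1`, with base-`p` digits `n_i = n / p^i % p` and
`k` the smallest index with `n_k ≠ 0`.  Then `p` does not divide the binomial
coefficient `C(n p^s − 1, n)` if and only if `n_{s+k} ≤ n_k − 1` and
`n_{s+k+i} ≤ n_{k+i}` for every `i ≥ 1`. -/
theorem not_dvd_choose_iff_digits (p : ℕ) (hp : p.Prime) (s n : ℕ)
    (hs : 1 ≤ s) (hn : 1 ≤ n) (k : ℕ)
    (hk0 : ∀ i < k, n / p ^ i % p = 0) (hk1 : n / p ^ k % p ≠ 0) :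
    ¬ p ∣ Nat.choose (n * p ^ s - 1) n ↔
      (n / p ^ (s + k) % p ≤ n / p ^ k % p - 1 ∧
        ∀ i, 1 ≤ i → n / p ^ (s + k + i) % p ≤ n / p ^ (k + i) % p) :=
  not_dvd_choose_iff_digits_general p hp s n k hk0 hk1
end

section
/- For every integer n ≥ 1, the binomial coefficient C(2n − 1, n) is odd if and only if n is a power of 2, i.e., n = 2^k for some k ≥ 0. -/
/-!
Since `C(2n, n) = 2 · C(2n − 1, n)`, the binomial `C(2n − 1, n)` is odd exactly when
`C(2n, n) = C(n + n, n)` is divisible by `2` only once. By Kummer's theorem the `2`-adic valuation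
of `C(n + n, n)` is `s(n) + s(n) − s(2n) = s(n)`, where `s` is the binary digit sum, and `s(n) = 1`
says that `n` is a power of `2`.
-/

namespace Nat

theorem digits_sum_pos (b : ℕ) {n : ℕ} (hn : n ≠ 0) : 0 < (b.digits n).sum :=
  List.sum_pos_iff_exists_pos_nat.mpr
    ⟨_, List.getLast_mem (digits_ne_nil_iff_ne_zero.mpr hn),
      pos_of_ne_zero (getLast_digit_ne_zero b hn)⟩

theorem digits_sum_base_mul {b m : ℕ} (hb : 1 < b) :
    (b.digits (b * m)).sum = (b.digits m).sum := by
  rcases m.eq_zero_or_pos with rfl | hm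
  · simp
  · simp [digits_base_mul hb hm]

theorem digits_sum_eq_one_iff {b n : ℕ} (hb : 1 < b) :
    (b.digits n).sum = 1 ↔ ∃ k, n = b ^ k := by
  constructor
  · induction n using Nat.strong_induction_on with
    | _ n ih =>
    intro hsum
    have hn : n ≠ 0 := by rintro rfl; simp at hsum
    rw [digits_def' hb (pos_of_ne_zero hn), List.sum_cons] at hsum
    have hdiv : n = n % b + b * (n / b) := (mod_add_div n b).symm
    rcases add_eq_one_iff.mp hsum with ⟨hmod, hquot⟩ | ⟨hmod, hquot⟩
    · obtain ⟨k, hk⟩ := ih (n / b) (div_lt_self (pos_of_ne_zero hn) hb) hquot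
      exact ⟨k + 1, by rw [hdiv, hmod, hk, pow_succ']; ring⟩
    · have hquot0 : n / b = 0 := by
        by_contra h
        exact (digits_sum_pos b h).ne' hquot
      exact ⟨0, by rw [hdiv, hmod, hquot0]; rfl⟩
  · rintro ⟨k, rfl⟩
    rw [← mul_one (b ^ k), digits_base_pow_mul hb one_pos, digits_of_lt b 1 one_ne_zero hb]
    simp

theorem padicValNat_two_centralBinom (n : ℕ) :
    padicValNat 2 n.centralBinom = (digits 2 n).sum := by
  have := sub_one_mul_padicValNat_choose_eq_sub_sum_digits' (p := 2) (n := n) (k := n)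
  rw [← two_mul, digits_sum_base_mul one_lt_two] at this
  rw [centralBinom_eq_two_mul_choose]
  omega

theorem two_mul_choose_two_mul_sub_one {n : ℕ} (hn : n ≠ 0) :
    2 * (2 * n - 1).choose n = n.centralBinom := by
  obtain ⟨m, rfl⟩ := exists_eq_add_one_of_ne_zero hn
  rw [centralBinom_eq_two_mul_choose, show 2 * (m + 1) - 1 = 2 * m + 1 by omega,
    show 2 * (m + 1) = 2 * m + 1 + 1 by ring, choose_succ_succ' (2 * m + 1) m,
    choose_symm_half]
  ring

end Nat

/-- For every `n ≥ 1`, the binomial coefficient `C(2n − 1, n)` is odd if and only if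
`n` is a power of `2`. -/
theorem odd_choose_two_mul_sub_one_iff (n : ℕ) (hn : 1 ≤ n) :
    Odd (Nat.choose (2 * n - 1) n) ↔ ∃ k : ℕ, n = 2 ^ k := by
  have hn0 : n ≠ 0 := Nat.one_le_iff_ne_zero.mp hn
  have hchoose : (2 * n - 1).choose n ≠ 0 := (Nat.choose_pos (by omega)).ne'
  have hval : padicValNat 2 n.centralBinom = 1 + padicValNat 2 ((2 * n - 1).choose n) := by
    rw [← Nat.two_mul_choose_two_mul_sub_one hn0, padicValNat.mul two_ne_zero hchoose,
      padicValNat_self]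
  rw [← Nat.digits_sum_eq_one_iff one_lt_two, ← Nat.padicValNat_two_centralBinom, hval,
    Nat.odd_iff, ← Nat.two_dvd_ne_zero]
  simp [padicValNat.eq_zero_iff, hchoose]
end

section
/- For all integers r ≥ 1 and s ≥ 1, the binomial coefficient C(r − 1, 2^s − 2) is odd if and only if r ≡ 0 (mod 2^s) or r ≡ −1 (mod 2^s). -/
/-!
Lucas's theorem modulo 2, applied to whole blocks of `s` binary digits, shows that reducing
`r - 1` modulo `2^s` does not change the parity of `C(r - 1, 2^s - 2)`, because the lower index
has only `s` binary digits. For `m < 2^s`, `C(m, 2^s - 2)` vanishes when `m < 2^s - 2` and equals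
`1` or `2^s - 1`, both odd, for the two remaining values of `m`; these correspond to
`r ≡ -1` and `r ≡ 0 (mod 2^s)`.
-/

open Finset in
theorem Choose.choose_modEq_choose_mod_pow_mul_choose_div_pow {p : ℕ} [Fact p.Prime]
    (n k a : ℕ) :
    n.choose k ≡ (n % p ^ a).choose (k % p ^ a) * (n / p ^ a).choose (k / p ^ a) [MOD p] := by
  have hpa : 0 < p ^ a := pow_pos (Fact.out : p.Prime).pos a
  have digit_mod (m i : ℕ) (hi : i ∈ range a) : m % p ^ a / p ^ i % p = m / p ^ i % p := by
    have hi : i < a := mem_range.1 hi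
    rw [← Nat.add_sub_of_le hi.le, pow_add, Nat.mod_mul_right_div_self,
      Nat.mod_mod_of_dvd _ (dvd_pow_self p (by omega))]
  have hlow :=
    Choose.choose_modEq_prod_range_choose_nat (p := p) (Nat.mod_lt n hpa) (Nat.mod_lt k hpa)
  rw [prod_congr rfl fun i hi => by rw [digit_mod n i hi, digit_mod k i hi]] at hlow
  rw [← Int.natCast_modEq_iff, Nat.cast_mul, mul_comm]
  exact (Choose.choose_modEq_choose_mul_prod_range_choose a).trans
    ((Int.natCast_modEq_iff.2 hlow.symm).mul_left _)

theorem Nat.odd_choose_iff_odd_choose_mod_two_pow {n k a : ℕ} (hk : k < 2 ^ a) :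
    Odd (n.choose k) ↔ Odd ((n % 2 ^ a).choose k) := by
  have : Fact (Nat.Prime 2) := ⟨Nat.prime_two⟩
  have h := Choose.choose_modEq_choose_mod_pow_mul_choose_div_pow (p := 2) n k a
  rw [Nat.mod_eq_of_lt hk, Nat.div_eq_of_lt hk, Nat.choose_zero_right, mul_one, Nat.ModEq] at h
  rw [Nat.odd_iff, Nat.odd_iff, h]

theorem Nat.odd_choose_sub_two_iff {N m : ℕ} (hN : Even N) (hN0 : N ≠ 0) (hm : m < N) :
    Odd (m.choose (N - 2)) ↔ m = N - 2 ∨ m = N - 1 := by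
  have hN2 : 2 ≤ N := by rcases hN with ⟨t, rfl⟩; omega
  rcases (by omega : m < N - 2 ∨ m = N - 2 ∨ m = N - 1) with hlt | rfl | rfl
  · rw [Nat.choose_eq_zero_of_lt hlt]
    simp only [Nat.not_odd_zero, false_iff]
    omega
  · simp
  · rw [Nat.choose_symm_of_eq_add (by omega : N - 1 = N - 2 + 1), Nat.choose_one_right]
    simpa using Nat.Even.sub_odd (by omega) hN odd_one

theorem Nat.dvd_add_iff_mod_eq_sub {N n c : ℕ} (hc : 0 < c) (hcN : c ≤ N) :
    N ∣ n + c ↔ n % N = N - c := by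
  have hm := Nat.mod_lt n (by omega : 0 < N)
  nth_rw 1 [← Nat.mod_add_div n N, add_right_comm, Nat.dvd_add_left (dvd_mul_right _ _)]
  constructor
  · intro h
    have := Nat.eq_of_dvd_of_lt_two_mul (by omega) h (by omega)
    omega
  · intro h
    rw [h, Nat.sub_add_cancel hcN]

theorem Int.natCast_modEq_neg_one_iff_dvd {N r : ℕ} :
    (r : ℤ) ≡ -1 [ZMOD N] ↔ N ∣ r + 1 := by
  rw [Int.modEq_iff_dvd, ← dvd_neg, ← Int.natCast_dvd_natCast]
  push_cast
  ring_nf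

/-- For all `r ≥ 1`, `s ≥ 1`, the binomial coefficient `C(r − 1, 2^s − 2)` is odd
if and only if `r ≡ 0 (mod 2^s)` or `r ≡ −1 (mod 2^s)`. -/
theorem odd_choose_iff_mod_two_pow (r s : ℕ) (hr : 1 ≤ r) (hs : 1 ≤ s) :
    Odd (Nat.choose (r - 1) (2 ^ s - 2)) ↔
      (r : ℤ) ≡ 0 [ZMOD (2 ^ s : ℕ)] ∨ (r : ℤ) ≡ -1 [ZMOD (2 ^ s : ℕ)] := by
  obtain ⟨n, rfl⟩ : ∃ n, r = n + 1 := ⟨r - 1, by omega⟩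
  have h2 : 2 ≤ 2 ^ s := Nat.le_self_pow (by omega) 2
  have parity : Odd (n.choose (2 ^ s - 2)) ↔ n % 2 ^ s = 2 ^ s - 2 ∨ n % 2 ^ s = 2 ^ s - 1 :=
    (Nat.odd_choose_iff_odd_choose_mod_two_pow (by omega)).trans <|
      Nat.odd_choose_sub_two_iff ((Nat.even_pow' (by omega)).2 even_two) (by positivity)
        (Nat.mod_lt _ (by positivity))
  have mod_zero : ((n + 1 : ℕ) : ℤ) ≡ 0 [ZMOD (2 ^ s : ℕ)] ↔ n % 2 ^ s = 2 ^ s - 1 := by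
    rw [Int.modEq_zero_iff_dvd, Int.natCast_dvd_natCast,
      Nat.dvd_add_iff_mod_eq_sub one_pos (by omega)]
  have mod_neg_one :
      ((n + 1 : ℕ) : ℤ) ≡ -1 [ZMOD (2 ^ s : ℕ)] ↔ n % 2 ^ s = 2 ^ s - 2 := by
    rw [Int.natCast_modEq_neg_one_iff_dvd, add_assoc, one_add_one_eq_two,
      Nat.dvd_add_iff_mod_eq_sub two_pos h2]
  rw [Nat.add_sub_cancel, parity, mod_zero, mod_neg_one, or_comm]
end

section
/- Let p be an odd prime and let r ≥ 1 and s ≥ 1 be integers. Then the binomial coefficient C(r − 1, p^s − 2) is not divisible by p if and only if r ≡ 0 (mod p^s) or r ≡ −1 (mod p^s). -/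
/-!
By Lucas's theorem, `p ∤ C(n, k)` iff every base-`p` digit of `k` is at most the corresponding
digit of `n`. For `1 ≤ j ≤ p` the last `s` digits of `p ^ s - j` are `p - j, p - 1, …, p - 1`, so
`p ∤ C(n, p ^ s - j)` iff the last `s` digits of `n` are at least these, i.e.
`p ^ s - j ≤ n % p ^ s`. For `j = 2` and `n = r - 1` this says `r ≡ 0` or `r ≡ -1 (mod p ^ s)`.
-/

namespace Nat

open scoped Nat

theorem Prime.dvd_choose_iff_lt {p m a : ℕ} (hp : p.Prime) (hm : m < p) :
    p ∣ m.choose a ↔ m < a := by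
  refine ⟨fun h => ?_, fun h => by rw [choose_eq_zero_of_lt h]; exact dvd_zero p⟩
  by_contra! ha
  have hfact : p ∣ m ! := by
    rw [← choose_mul_factorial_mul_factorial ha]
    exact dvd_mul_of_dvd_left (dvd_mul_of_dvd_left h _) _
  exact hm.not_ge (hp.dvd_factorial.1 hfact)

theorem not_dvd_choose_mul_add_iff {p a : ℕ} [hp : Fact p.Prime] (ha : a < p) (n b : ℕ) :
    ¬ p ∣ n.choose (p * b + a) ↔ a ≤ n % p ∧ ¬ p ∣ (n / p).choose b := by
  have hk_mod : (p * b + a) % p = a := by rw [mul_comm]; exact mul_add_mod_of_lt ha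
  have hk_div : (p * b + a) / p = b := by rw [mul_add_div hp.out.pos, div_eq_of_lt ha, add_zero]
  rw [(Choose.choose_modEq_choose_mod_mul_choose_div_nat).dvd_iff dvd_rfl, hk_mod, hk_div,
    hp.out.dvd_mul, not_or, hp.out.dvd_choose_iff_lt (mod_lt n hp.out.pos), not_lt]

theorem mul_add_le_mul_add_iff {p a b c m : ℕ} (ha : a < p) (hb : b ≤ m) :
    p * m + c ≤ p * b + a ↔ b = m ∧ c ≤ a := by
  constructor
  · intro h
    obtain rfl | hlt := hb.eq_or_lt
    · exact ⟨rfl, by omega⟩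
    · have : p * (b + 1) ≤ p * m := Nat.mul_le_mul_left p hlt
      rw [mul_add_one] at this
      omega
  · rintro ⟨rfl, hca⟩
    omega

theorem not_dvd_choose_pow_sub_iff {p j : ℕ} [hp : Fact p.Prime] (hj : 0 < j) (hjp : j ≤ p)
    (s n : ℕ) : ¬ p ∣ n.choose (p ^ s - j) ↔ p ^ s - j ≤ n % p ^ s := by
  induction s generalizing j n with
  | zero => simp [show 1 - j = 0 by omega, hp.out.ne_one]
  | succ s ih =>
    have hps : 0 < p ^ s := pow_pos hp.out.pos s
    have hdigit := mod_lt (n / p) hps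
    have hk : p ^ (s + 1) - j = p * (p ^ s - 1) + (p - j) := by
      have : p ≤ p * p ^ s := Nat.le_mul_of_pos_right p hps
      rw [pow_succ', mul_sub_one]
      omega
    have hn : n % p ^ (s + 1) = p * (n / p % p ^ s) + n % p := by
      rw [pow_succ', mod_mul, add_comm]
    rw [hk, hn, not_dvd_choose_mul_add_iff (by omega), ih one_pos hp.out.one_lt.le,
      mul_add_le_mul_add_iff (mod_lt n hp.out.pos) (by omega)]
    omega

theorem dvd_add_iff_mod_add_eq {q n k : ℕ} (hk : 0 < k) (hkq : k ≤ q) :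
    q ∣ n + k ↔ n % q + k = q := by
  have hn : n + k = (n % q + k) + q * (n / q) := by have := mod_add_div n q; omega
  rw [hn, Nat.dvd_add_left (dvd_mul_right q _)]
  refine ⟨fun h => eq_of_dvd_of_lt_two_mul (by omega) h ?_, fun h => by rw [h]⟩
  have := mod_lt n (show 0 < q by omega)
  omega

end Nat

theorem not_dvd_choose_iff_mod_p_pow_general (p : ℕ) (hp : p.Prime)
    (r s : ℕ) (hr : 1 ≤ r) (hs : 1 ≤ s) :
    ¬ p ∣ Nat.choose (r - 1) (p ^ s - 2) ↔
      (r : ℤ) ≡ 0 [ZMOD (p ^ s : ℕ)] ∨ (r : ℤ) ≡ -1 [ZMOD (p ^ s : ℕ)] := by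
  have := Fact.mk hp
  obtain ⟨n, rfl⟩ : ∃ n, r = n + 1 := ⟨r - 1, by omega⟩
  have hq : 2 ≤ p ^ s := hp.two_le.trans (Nat.le_self_pow (by omega) p)
  have hneg : ((n + 1 : ℕ) : ℤ) ≡ -1 [ZMOD (p ^ s : ℕ)] ↔ p ^ s ∣ n + 2 := by
    rw [Int.modEq_iff_dvd, show (-1 : ℤ) - (n + 1 : ℕ) = -((n + 2 : ℕ) : ℤ) by push_cast; ring,
      Int.dvd_neg, Int.natCast_dvd_natCast]
  rw [Nat.add_sub_cancel, Nat.not_dvd_choose_pow_sub_iff two_pos hp.two_le,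
    Int.modEq_zero_iff_dvd, Int.natCast_dvd_natCast, hneg,
    Nat.dvd_add_iff_mod_add_eq one_pos (by omega), Nat.dvd_add_iff_mod_add_eq two_pos hq]
  have := Nat.mod_lt n (show 0 < p ^ s by omega)
  omega

/-- Let `p` be an odd prime and `r ≥ 1`, `s ≥ 1`.  Then `p` does not divide the
binomial coefficient `C(r − 1, p^s − 2)` if and only if `r ≡ 0 (mod p^s)` or
`r ≡ −1 (mod p^s)`. -/
theorem not_dvd_choose_iff_mod_p_pow (p : ℕ) (hp : p.Prime) (hodd : Odd p)
    (r s : ℕ) (hr : 1 ≤ r) (hs : 1 ≤ s) :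
    ¬ p ∣ Nat.choose (r - 1) (p ^ s - 2) ↔
      (r : ℤ) ≡ 0 [ZMOD (p ^ s : ℕ)] ∨ (r : ℤ) ≡ -1 [ZMOD (p ^ s : ℕ)] :=
  not_dvd_choose_iff_mod_p_pow_general p hp r s hr hs
end

section
/- Let p be a prime. For every s ≥ 1, the equality N_{p^s − 1}(ξ) = −ζ_s holds in F_p[ξ_1, ξ_2, …]. -/
open MvPolynomial

open Classical in
/-- The substitution `t_m ↦ ξ_r` if `m = p^r − 1` for some `r ≥ 1`, and `t_m ↦ 0`
otherwise; the variable `ξ_r` of `F_p[ξ_1, ξ_2, …]` is `X r`. -/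
noncomputable def xiSub (p : ℕ) (m : ℕ) : MvPolynomial ℕ (ZMod p) :=
  if h : ∃ r, 1 ≤ r ∧ m = p ^ r - 1 then X h.choose else 0

/-- `N_n(ξ) ∈ F_p[ξ_1, ξ_2, …]`. -/
noncomputable def Nxi (p n : ℕ) : MvPolynomial ℕ (ZMod p) :=
  aeval (xiSub p) (newton (ZMod p) n)

/-- The conjugates `ζ_s ∈ F_p[ξ_1, ξ_2, …]`: `ζ_0 = 1` and
`ζ_s = −(ζ_{s−1} ξ_1^{p^{s−1}} + ζ_{s−2} ξ_2^{p^{s−2}} + ⋯ + ζ_1 ξ_{s−1}^p + ξ_s)`. -/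
noncomputable def zeta (p : ℕ) : ℕ → MvPolynomial ℕ (ZMod p)
  | 0 => 1
  | (s+1) => - ∑ i ∈ Finset.range (s+1), zeta p (s - i) * (X (i+1))^(p^(s-i))
  decreasing_by omega

/-!
Let `E = 1 + ∑ₘ tₘ xᵐ = ∑ᵣ ξᵣ x ^ (pʳ - 1)` (with `ξ₀ = 1`) be the generating series of the
substituted variables. Newton's identities say `E · ∑ (-1)ⁿ Nₙ xⁿ = -∑ n tₙ xⁿ`, and `n tₙ = -tₙ`
in characteristic `p` because `tₙ ≠ 0` forces `n + 1 = pʳ`; so `M = 1 - ∑ (-1)ⁿ Nₙ xⁿ` is the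
inverse of `E`. Since `M = E ^ (p - 1) M ^ p` and `E ^ (p - 1)` has no monomial of positive degree
divisible by `p`, the coefficients of `M` satisfy `m_{pn} = m_n ^ p`. Hence `E M = 1` in degree
`pˢ - 1` says that `∑ vₛ x ^ pˢ`, where `vₛ = m_{pˢ-1}`, is a right inverse of `∑ ξᵣ x ^ pʳ` for
composition, while the recursion defining `ζ` says that `∑ ζₛ x ^ pˢ` is a left inverse.
Composition is associative, so `vₛ = ζₛ`, and `vₛ = -N_{pˢ-1}` because `(-1) ^ (pˢ - 1) = 1`
in characteristic `p`.
-/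

open Finset

theorem Nat.pow_add_sub_one_eq {p : ℕ} (hp : 0 < p) (r j : ℕ) :
    p ^ (r + j) - 1 = (p ^ r - 1) + p ^ r * (p ^ j - 1) := by
  have hr : 1 ≤ p ^ r := Nat.one_le_pow r p hp
  have hj : 1 ≤ p ^ j := Nat.one_le_pow j p hp
  rw [Nat.mul_sub_one, ← pow_add]
  have : p ^ r ≤ p ^ (r + j) := Nat.pow_le_pow_right hp (r.le_add_right j)
  omega

theorem Finset.Nat.sum_antidiagonal_antidiagonal {M : Type*} [AddCommMonoid M] (n : ℕ)
    (f : ℕ → ℕ → ℕ → M) :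
    ∑ x ∈ antidiagonal n, ∑ y ∈ antidiagonal x.1, f y.1 y.2 x.2 =
      ∑ x ∈ antidiagonal n, ∑ y ∈ antidiagonal x.2, f x.1 y.1 y.2 := by
  rw [sum_sigma', sum_sigma']
  refine sum_nbij' (fun x => ⟨(x.2.1, x.2.2 + x.1.2), (x.2.2, x.1.2)⟩)
    (fun x => ⟨(x.1.1 + x.2.1, x.2.2), (x.1.1, x.2.1)⟩) ?_ ?_ ?_ ?_ (fun _ _ => rfl) <;>
  · rintro ⟨⟨a, b⟩, ⟨c, d⟩⟩ h
    simp only [mem_sigma, HasAntidiagonal.mem_antidiagonal, and_true] at h ⊢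
    first
    | omega
    | obtain ⟨-, rfl⟩ := h; rfl

theorem neg_one_pow_succ_mul_neg_one_pow {A : Type*} [CommRing A] {i m : ℕ} (h : i ≤ m) :
    (-1 : A) ^ (m + 1) * (-1) ^ i = -(-1) ^ (m - i) := by
  obtain ⟨k, rfl⟩ := Nat.exists_eq_add_of_le h
  have hii : (-1 : A) ^ i * (-1) ^ i = 1 := by
    rw [← pow_add, ← two_mul, pow_mul, neg_one_sq, one_pow]
  rw [Nat.add_sub_cancel_left, pow_succ, pow_add]
  linear_combination (-(-1 : A) ^ k) * hii

theorem neg_one_pow_expChar_pow_sub_one (R : Type*) [Ring R] (p n : ℕ) [ExpChar R p] :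
    (-1 : R) ^ (p ^ n - 1) = 1 := by
  have h := neg_one_pow_expChar_pow R p n
  rw [← pow_sub_one_mul (pow_ne_zero n (expChar_ne_zero R p))] at h
  simpa using h

namespace PowerSeries

variable {R : Type*} [CommRing R] {p : ℕ} {f g : R⟦X⟧}

theorem exists_dvd_add_of_coeff_pow_ne_zero (hf : ∀ k ≠ 0, coeff k f ≠ 0 → p ∣ k + 1) (k : ℕ)
    {m : ℕ} (hm : coeff m (f ^ k) ≠ 0) : ∃ c ≤ k, p ∣ m + c ∧ (c = 0 → m = 0) := by
  induction k generalizing m with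
  | zero =>
    rw [pow_zero, coeff_one] at hm
    have hm0 : m = 0 := by by_contra h; simp [h] at hm
    exact ⟨0, le_rfl, by simp [hm0], fun _ => hm0⟩
  | succ k ih =>
    rw [pow_succ, coeff_mul] at hm
    obtain ⟨⟨a, b⟩, hab, hne⟩ := exists_ne_zero_of_sum_ne_zero hm
    rw [HasAntidiagonal.mem_antidiagonal] at hab
    obtain ⟨c, hck, hdvd, hc0⟩ := ih (left_ne_zero_of_mul hne)
    by_cases hb : b = 0
    · subst hb
      exact ⟨c, hck.trans k.le_succ, by simpa [← hab] using hdvd, by simpa [← hab] using hc0⟩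
    · refine ⟨c + 1, by omega, ?_, by omega⟩
      rw [← hab, show a + b + (c + 1) = (a + c) + (b + 1) by ring]
      exact dvd_add hdvd (hf b hb (right_ne_zero_of_mul hne))

theorem coeff_mul_pow_sub_one_eq_zero (hp : 0 < p) (hf : ∀ k ≠ 0, coeff k f ≠ 0 → p ∣ k + 1)
    {j : ℕ} (hj : j ≠ 0) : coeff (p * j) (f ^ (p - 1)) = 0 := by
  by_contra h
  obtain ⟨c, hc, hdvd, hc0⟩ := exists_dvd_add_of_coeff_pow_ne_zero hf (p - 1) h
  have : p ∣ c := (Nat.dvd_add_right (dvd_mul_right p j)).mp hdvd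
  have : c = 0 := Nat.eq_zero_of_dvd_of_lt this (by omega)
  exact mul_ne_zero hp.ne' hj (hc0 this)

section ExpChar

variable [ExpChar R p]

theorem coeff_pow_expChar (f : R⟦X⟧) (m : ℕ) :
    coeff m (f ^ p) = if p ∣ m then coeff (m / p) f ^ p else 0 := by
  have hp : p ≠ 0 := expChar_ne_zero R p
  rw [← MvPowerSeries.map_frobenius_expand p hp]
  change coeff m (map (frobenius R p) (expand p hp f)) = _
  rw [coeff_map, coeff_expand]
  split_ifs <;> simp [frobenius_def, hp]

theorem coeff_mul_eq_pow_of_mul_eq_one (hf0 : constantCoeff f = 1)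
    (hf : ∀ k ≠ 0, coeff k f ≠ 0 → p ∣ k + 1) (hfg : f * g = 1) (n : ℕ) :
    coeff (p * n) g = coeff n g ^ p := by
  have hp : 0 < p := Nat.pos_of_ne_zero (expChar_ne_zero R p)
  have hg : f ^ (p - 1) * g ^ p = g := by
    rw [← pow_sub_one_mul hp.ne' g, ← mul_assoc, ← mul_pow, hfg, one_pow, one_mul]
  conv_lhs => rw [← hg]
  rw [coeff_mul, sum_eq_single (0, p * n)]
  · rw [coeff_zero_eq_constantCoeff_apply, map_pow, hf0, one_pow, one_mul, coeff_pow_expChar,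
      if_pos (dvd_mul_right p n), Nat.mul_div_cancel_left n hp]
  · rintro ⟨a, b⟩ hab hne
    rw [HasAntidiagonal.mem_antidiagonal] at hab
    by_cases hb : p ∣ b
    · obtain ⟨j, rfl⟩ : p ∣ a := (Nat.dvd_add_left hb).mp (hab ▸ dvd_mul_right p n)
      have hj : j ≠ 0 := by rintro rfl; simp_all
      rw [coeff_mul_pow_sub_one_eq_zero hp hf hj, zero_mul]
    · rw [coeff_pow_expChar (p := p), if_neg hb, mul_zero]
  · simp

theorem coeff_pow_mul_eq_pow_of_mul_eq_one (hf0 : constantCoeff f = 1)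
    (hf : ∀ k ≠ 0, coeff k f ≠ 0 → p ∣ k + 1) (hfg : f * g = 1) (r n : ℕ) :
    coeff (p ^ r * n) g = coeff n g ^ p ^ r := by
  induction r with
  | zero => simp
  | succ r ih =>
    rw [pow_succ', mul_assoc, coeff_mul_eq_pow_of_mul_eq_one hf0 hf hfg, ih, ← pow_mul, mul_comm]

end ExpChar

end PowerSeries

section FrobComp

variable {R : Type*} [CommSemiring R] {p : ℕ}

/-- The coefficient of `X ^ p ^ n` in the composite `A ∘ B` of the `p`-polynomials
`A = ∑ aᵢ X ^ p ^ i` and `B = ∑ bⱼ X ^ p ^ j`, over a ring of characteristic `p`. -/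
def frobComp (p : ℕ) (a b : ℕ → R) (n : ℕ) : R :=
  ∑ x ∈ antidiagonal n, a x.1 * b x.2 ^ p ^ x.1

theorem single_zero_frobComp (b : ℕ → R) : frobComp p (Pi.single 0 1) b = b := by
  funext n
  rw [frobComp, sum_eq_single (0, n)]
  · simp
  · rintro ⟨i, j⟩ hij hne
    have hi : i ≠ 0 := by rintro rfl; simp_all
    simp [hi]
  · simp

theorem frobComp_single_zero (hp : p ≠ 0) (a : ℕ → R) : frobComp p a (Pi.single 0 1) = a := by
  funext n
  rw [frobComp, sum_eq_single (n, 0)]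
  · simp
  · rintro ⟨i, j⟩ hij hne
    have hj : j ≠ 0 := by rintro rfl; simp_all
    simp [hj, hp]
  · simp

theorem frobComp_assoc [ExpChar R p] (a b c : ℕ → R) :
    frobComp p (frobComp p a b) c = frobComp p a (frobComp p b c) := by
  funext n
  simp only [frobComp, sum_mul, mul_sum, sum_pow_char_pow]
  calc _ = ∑ x ∈ antidiagonal n, ∑ y ∈ antidiagonal x.1,
          a y.1 * (b y.2 ^ p ^ y.1 * c x.2 ^ p ^ (y.1 + y.2)) :=
        sum_congr rfl fun x _ => sum_congr rfl fun y hy => by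
          rw [← HasAntidiagonal.mem_antidiagonal.mp hy, pow_add, pow_mul]
          ring
    _ = _ := Nat.sum_antidiagonal_antidiagonal n fun i j k =>
        a i * (b j ^ p ^ i * c k ^ p ^ (i + j))
    _ = _ := sum_congr rfl fun x _ => sum_congr rfl fun y _ => by
        rw [mul_pow, ← pow_mul, ← pow_add, add_comm y.1]

theorem frobComp_left_inv_eq_right_inv [ExpChar R p] {a b c : ℕ → R}
    (hab : frobComp p a b = Pi.single 0 1) (hbc : frobComp p b c = Pi.single 0 1) : a = c := by
  rw [← frobComp_single_zero (expChar_ne_zero R p) a, ← hbc, ← frobComp_assoc, hab,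
    single_zero_frobComp]

end FrobComp

open PowerSeries in
theorem frobComp_coeff_eq_single_of_mul_eq_one {R : Type*} [CommRing R] {p : ℕ} [Fact p.Prime]
    [CharP R p] {f g : R⟦X⟧} (hf0 : constantCoeff f = 1)
    (hf : ∀ k, coeff k f ≠ 0 → ∃ r, k + 1 = p ^ r) (hfg : f * g = 1) :
    frobComp p (fun r => coeff (p ^ r - 1) f) (fun j => coeff (p ^ j - 1) g) = Pi.single 0 1 := by
  have hp : 1 < p := (Fact.out : p.Prime).one_lt
  have hf' : ∀ k ≠ 0, coeff k f ≠ 0 → p ∣ k + 1 := fun k hk hfk => by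
    obtain ⟨r, hr⟩ := hf k hfk
    exact hr ▸ dvd_pow_self p (by rintro rfl; simp_all)
  funext s
  calc frobComp p (fun r => coeff (p ^ r - 1) f) (fun j => coeff (p ^ j - 1) g) s
      = ∑ x ∈ antidiagonal s, coeff (p ^ x.1 - 1) f * coeff (p ^ x.1 * (p ^ x.2 - 1)) g := by
        simp only [frobComp, coeff_pow_mul_eq_pow_of_mul_eq_one hf0 hf' hfg]
    _ = ∑ x ∈ antidiagonal (p ^ s - 1), coeff x.1 f * coeff x.2 g := by
      refine sum_of_injOn (fun x => (p ^ x.1 - 1, p ^ x.1 * (p ^ x.2 - 1))) ?_ ?_ ?_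
        (fun _ _ => rfl)
      · rintro ⟨r, j⟩ hrj ⟨r', j'⟩ hrj' he
        simp only [mem_coe, HasAntidiagonal.mem_antidiagonal, Prod.mk.injEq] at hrj hrj' he
        have hr : r = r' := Nat.pow_right_injective hp <| by
          have := Nat.one_le_pow r p (by omega); have := Nat.one_le_pow r' p (by omega)
          simp only; omega
        subst hr
        simp only [Prod.mk.injEq, true_and]
        omega
      · rintro ⟨r, j⟩ hrj
        simp only [mem_coe, HasAntidiagonal.mem_antidiagonal] at hrj ⊢
        rw [← Nat.pow_add_sub_one_eq (by omega), hrj]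
      · rintro ⟨a, b⟩ hab hnot
        by_contra hne
        obtain ⟨r, hr⟩ := hf a (left_ne_zero_of_mul hne)
        simp only [HasAntidiagonal.mem_antidiagonal] at hab
        have hrs : r ≤ s := (Nat.pow_le_pow_iff_right hp).mp <| by
          have := Nat.one_le_pow s p (by omega); omega
        refine hnot ⟨(r, s - r), by simp [hrs], ?_⟩
        have := Nat.pow_add_sub_one_eq (p := p) (by omega) r (s - r)
        rw [Nat.add_sub_cancel' hrs] at this
        simp only [Prod.mk.injEq]
        omega
    _ = (Pi.single 0 1 : ℕ → R) s := by
      rw [← PowerSeries.coeff_mul, hfg, PowerSeries.coeff_one]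
      rcases eq_or_ne s 0 with rfl | hs
      · simp
      · have := Nat.one_lt_pow hs hp
        rw [if_neg (by omega), Pi.single_eq_of_ne hs]

open PowerSeries in
theorem one_add_mk_mul_mk_newton {R A : Type*} [CommRing R] [CommRing A] [Algebra R A]
    (f : ℕ → A) (hf : f 0 = 0) :
    (1 + mk f) * mk (fun n => (-1) ^ n * aeval f (newton R n)) = -mk (fun n => n * f n) := by
  ext n
  rcases n with _ | m
  · simp [newton, hf]
  · rw [add_mul, one_mul, map_add, PowerSeries.coeff_mul, Nat.sum_antidiagonal_succ,
      Nat.sum_antidiagonal_eq_sum_range_succ (fun a b => coeff (a + 1) (mk f) * coeff b _),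
      sum_range_succ]
    simp only [coeff_mk, hf, zero_mul, zero_add, Nat.sub_self, map_neg]
    have hN0 : aeval f (newton R 0) = 0 := by rw [newton.eq_1, map_zero]
    have hsum : (-1) ^ (m + 1) * ∑ i ∈ range m, (-1) ^ i * f (i + 1) * aeval f (newton R (m - i)) =
        -∑ i ∈ range m, f (i + 1) * ((-1) ^ (m - i) * aeval f (newton R (m - i))) := by
      rw [mul_sum, ← sum_neg_distrib]
      refine sum_congr rfl fun i hi => ?_
      rw [← mul_assoc, ← mul_assoc, neg_one_pow_succ_mul_neg_one_pow (mem_range.mp hi).le]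
      ring
    rw [newton.eq_2]
    simp only [map_add, map_sum, map_mul, map_pow, map_neg, map_one, aeval_X, map_natCast, hN0,
      mul_zero, add_zero, mul_add, hsum]
    have hm : (-1 : A) ^ (m + 1) * (-1) ^ m = -1 := by
      simpa using neg_one_pow_succ_mul_neg_one_pow (A := A) (le_refl m)
    linear_combination (((m + 1 : ℕ) : A) * f (m + 1)) * hm

section Xi

variable {p : ℕ}

theorem xiSub_zero (hp : 1 < p) : xiSub p 0 = 0 := by
  rw [xiSub, dif_neg]
  rintro ⟨r, hr, h0⟩
  have := Nat.one_lt_pow (by omega) hp (n := r)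
  omega

theorem exists_of_xiSub_ne_zero (hp : p ≠ 0) {m : ℕ} (h : xiSub p m ≠ 0) :
    ∃ r, 1 ≤ r ∧ m + 1 = p ^ r := by
  rw [xiSub] at h
  split_ifs at h with hm
  · obtain ⟨r, hr, rfl⟩ := hm
    exact ⟨r, hr, Nat.sub_add_cancel (Nat.one_le_pow r p (Nat.pos_of_ne_zero hp))⟩
  · exact absurd rfl h

theorem xiSub_pow_sub_one (hp : 1 < p) {r : ℕ} (hr : 1 ≤ r) : xiSub p (p ^ r - 1) = X r := by
  have h : ∃ r', 1 ≤ r' ∧ p ^ r - 1 = p ^ r' - 1 := ⟨r, hr, rfl⟩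
  rw [xiSub, dif_pos h]
  congr
  have := h.choose_spec.2
  have := Nat.one_le_pow r p (by omega)
  have := Nat.one_le_pow h.choose p (by omega)
  exact Nat.pow_right_injective hp (by simp only; omega)

theorem natCast_mul_xiSub (hp : p ≠ 0) (m : ℕ) :
    (m : MvPolynomial ℕ (ZMod p)) * xiSub p m = -xiSub p m := by
  by_cases h : xiSub p m = 0
  · simp [h]
  obtain ⟨r, hr, hm⟩ := exists_of_xiSub_ne_zero hp h
  have hcast : ((m + 1 : ℕ) : MvPolynomial ℕ (ZMod p)) = 0 := by
    rw [hm, Nat.cast_pow, CharP.cast_eq_zero, zero_pow (by omega)]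
  push_cast at hcast
  linear_combination xiSub p m * hcast

noncomputable def xi (p : ℕ) : ℕ → MvPolynomial ℕ (ZMod p)
  | 0 => 1
  | r + 1 => X (r + 1)

theorem zeta_frobComp_xi (p : ℕ) : frobComp p (zeta p) (xi p) = Pi.single 0 1 := by
  funext n
  rcases n with _ | s
  · simp [frobComp, zeta, xi]
  · rw [frobComp, Nat.sum_antidiagonal_succ', ← Nat.sum_antidiagonal_swap]
    simp only [Prod.fst_swap, Prod.snd_swap]
    rw [Nat.sum_antidiagonal_eq_sum_range_succ (fun j i => zeta p i * xi p (j + 1) ^ p ^ i),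
      zeta.eq_2]
    simp [xi]

end Xi

section Series

open PowerSeries

variable {p : ℕ}

noncomputable def xiSeries (p : ℕ) : (MvPolynomial ℕ (ZMod p))⟦X⟧ := 1 + mk (xiSub p)

noncomputable def newtonSeries (p : ℕ) : (MvPolynomial ℕ (ZMod p))⟦X⟧ :=
  1 - mk fun n => (-1) ^ n * Nxi p n

theorem xiSeries_mul_newtonSeries (hp : 1 < p) : xiSeries p * newtonSeries p = 1 := by
  have h := one_add_mk_mul_mk_newton (R := ZMod p) (xiSub p) (xiSub_zero hp)
  have hT : mk (fun n => (n : MvPolynomial ℕ (ZMod p)) * xiSub p n) = -mk (xiSub p) := by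
    ext n
    simp [natCast_mul_xiSub (p := p) (by omega)]
  rw [hT, neg_neg] at h
  rw [xiSeries, newtonSeries, mul_sub, mul_one]
  unfold Nxi
  rw [h]
  ring

theorem constantCoeff_xiSeries (hp : 1 < p) : constantCoeff (xiSeries p) = 1 := by
  simp [xiSeries, xiSub_zero hp]

theorem coeff_xiSeries_pow_sub_one (hp : 1 < p) (r : ℕ) :
    coeff (p ^ r - 1) (xiSeries p) = xi p r := by
  rcases r with _ | r
  · simp [xiSeries, xiSub_zero hp, xi]
  · have := Nat.one_lt_pow (n := r + 1) (by omega) hp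
    rw [xiSeries, map_add, PowerSeries.coeff_one, if_neg (by omega), coeff_mk, zero_add,
      xiSub_pow_sub_one hp (by omega), xi]

theorem exists_of_coeff_xiSeries_ne_zero (hp : p ≠ 0) {k : ℕ} (h : coeff k (xiSeries p) ≠ 0) :
    ∃ r, k + 1 = p ^ r := by
  rcases eq_or_ne k 0 with rfl | hk
  · exact ⟨0, rfl⟩
  · rw [xiSeries, map_add, PowerSeries.coeff_one, if_neg hk, coeff_mk, zero_add] at h
    obtain ⟨r, -, hr⟩ := exists_of_xiSub_ne_zero hp h
    exact ⟨r, hr⟩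

theorem coeff_newtonSeries {n : ℕ} (hn : n ≠ 0) :
    coeff n (newtonSeries p) = -(-1) ^ n * Nxi p n := by
  rw [newtonSeries, map_sub, PowerSeries.coeff_one, if_neg hn, coeff_mk]
  ring

end Series

/-- For every prime `p` and `s ≥ 1`, `N_{p^s − 1}(ξ) = −ζ_s` in `F_p[ξ_1, ξ_2, …]`. -/
theorem Nxi_p_pow_sub_one (p : ℕ) (hp : p.Prime) (s : ℕ) (hs : 1 ≤ s) :
    Nxi p (p ^ s - 1) = - zeta p s := by
  have := Fact.mk hp
  have hinv : frobComp p (xi p) (fun j => PowerSeries.coeff (p ^ j - 1) (newtonSeries p)) =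
      Pi.single 0 1 := by
    simpa only [coeff_xiSeries_pow_sub_one hp.one_lt] using
      frobComp_coeff_eq_single_of_mul_eq_one (constantCoeff_xiSeries hp.one_lt)
        (fun _ => exists_of_coeff_xiSeries_ne_zero hp.ne_zero) (xiSeries_mul_newtonSeries hp.one_lt)
  have hzeta := congrFun (frobComp_left_inv_eq_right_inv (zeta_frobComp_xi p) hinv) s
  have hps : p ^ s - 1 ≠ 0 := by have := Nat.one_lt_pow (by omega : s ≠ 0) hp.one_lt; omega
  rw [hzeta, coeff_newtonSeries hps, neg_one_pow_expChar_pow_sub_one]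
  ring
end

section
/- Let p be a prime. For every k ≥ 1, the element N_{k(p−1)}(ξ) of F_p[ξ_1, ξ_2, …] is nonzero. -/
open MvPolynomial

/-!
Send `ξ_1 ↦ 1` and `ξ_r ↦ 0` for `r ≥ 2`. Then only `t_{p-1}` survives, and with a single
nonzero variable `t_m = x` Newton's recursion collapses to `N_{km} = ((-1)^(m-1) x)^k · m`.
For `m = p - 1` and `x = 1` this is `±1` in `𝔽_p`, so `N_{k(p-1)}(ξ)` cannot vanish.
-/

section NewtonAtSingle

variable {R S : Type*} [CommRing R] [CommRing S] [Algebra R S]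

theorem aeval_newton_succ (f : ℕ → S) (n : ℕ) :
    aeval f (newton R (n + 1)) =
      ∑ i ∈ Finset.range n, (-1) ^ i * f (i + 1) * aeval f (newton R (n - i))
        + (-1) ^ n * (n + 1 : ℕ) * f (n + 1) := by
  rw [newton]
  simp only [map_add, map_sum, map_mul, map_pow, map_neg, map_one, aeval_X, map_natCast]

theorem aeval_single_newton_self (m : ℕ) (x : S) :
    aeval (Pi.single m x) (newton R m) = (-1) ^ (m - 1) * m * x := by
  cases m with
  | zero => simp [newton]
  | succ n =>
    rw [aeval_newton_succ, Finset.sum_eq_zero fun i hi => ?_, zero_add, Pi.single_eq_same,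
      Nat.add_sub_cancel]
    rw [Pi.single_eq_of_ne (by simp at hi; omega), mul_zero, zero_mul]

theorem aeval_single_newton_add (m n : ℕ) (hm : 1 ≤ m) (hn : 1 ≤ n) (x : S) :
    aeval (Pi.single m x) (newton R (n + m)) =
      (-1) ^ (m - 1) * x * aeval (Pi.single m x) (newton R n) := by
  rw [show n + m = n + m - 1 + 1 by omega, aeval_newton_succ,
    Finset.sum_eq_single_of_mem (m - 1) (by simp; omega) fun i _ hi => ?_,
    Nat.sub_add_cancel hm, Pi.single_eq_same, Pi.single_eq_of_ne (i := m) (by omega), mul_zero,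
    add_zero, show n + m - 1 - (m - 1) = n by omega]
  rw [Pi.single_eq_of_ne (by omega), mul_zero, zero_mul]

theorem aeval_single_newton_mul (m k : ℕ) (hm : 1 ≤ m) (hk : 1 ≤ k) (x : S) :
    aeval (Pi.single m x) (newton R (k * m)) = ((-1) ^ (m - 1) * x) ^ k * m := by
  induction k, hk using Nat.le_induction with
  | base => rw [one_mul, pow_one, aeval_single_newton_self]; ring
  | succ k hk ih =>
    rw [add_one_mul, aeval_single_newton_add m _ hm (Nat.mul_pos hk hm), ih]; ring

end NewtonAtSingle

theorem aeval_single_one_xiSub {S : Type*} [CommRing S] {p : ℕ} [Algebra (ZMod p) S]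
    (hp : 2 ≤ p) (x : S) (m : ℕ) :
    aeval (Pi.single 1 x) (xiSub p m) = (Pi.single (p - 1) x : ℕ → S) m := by
  unfold xiSub
  split_ifs with h
  · obtain ⟨hr, hm⟩ := h.choose_spec
    rw [aeval_X]
    by_cases hr1 : h.choose = 1
    · rw [hr1, hm, hr1, pow_one, Pi.single_eq_same, Pi.single_eq_same]
    · have hpow_ne : p ^ h.choose ≠ p := by simpa using (Nat.pow_right_injective hp).ne hr1
      have hpow_pos : 1 ≤ p ^ h.choose := Nat.one_le_pow _ _ (by omega)
      rw [Pi.single_eq_of_ne hr1, Pi.single_eq_of_ne (by rw [hm]; omega)]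
  · rw [map_zero, Pi.single_eq_of_ne fun hm => h ⟨1, le_rfl, by rw [hm, pow_one]⟩]

/-- For every prime `p` and `k ≥ 1`, the element `N_{k(p−1)}(ξ)` of
`F_p[ξ_1, ξ_2, …]` is nonzero. -/
theorem Nxi_k_mul_p_sub_one_ne_zero (p : ℕ) (hp : p.Prime) (k : ℕ) (hk : 1 ≤ k) :
    Nxi p (k * (p - 1)) ≠ 0 := by
  have : Fact p.Prime := ⟨hp⟩
  have hξ : (aeval (Pi.single 1 (1 : ZMod p))).comp (aeval (xiSub p)) =
      aeval (Pi.single (p - 1) 1) := by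
    rw [comp_aeval]
    congr 1
    funext m
    exact aeval_single_one_xiSub hp.two_le 1 m
  intro h
  have h1 := congrArg (aeval (Pi.single 1 (1 : ZMod p))) h
  rw [Nxi, ← AlgHom.comp_apply, hξ,
    aeval_single_newton_mul _ _ (Nat.le_sub_one_of_lt hp.one_lt) hk, map_zero,
    Nat.cast_sub hp.one_le, ZMod.natCast_self] at h1
  simp at h1
end

section
/- Let p be a prime and s ≥ 1. In the formal power series ring F_p[ζ][[t]], where F_p[ζ] is the polynomial ring over F_p = ℤ/p in one indeterminate ζ, one has (1 + Σ_{m≥1} (−1)^m ζ^{(p^{ms}−1)/(p^s−1)} t^{p^{ms}−1}) · (1 + Σ_{n≥1} (−1)^n C(np^s − 1, n) ζ^n t^{n(p^s−1)}) = 1, where the binomial coefficients C(np^s − 1, n) are taken modulo p and the exponent (p^{ms}−1)/(p^s−1) = 1 + p^s + ⋯ + p^{(m−1)s}. (This is the inverse-series identity of the paper's Lemma 5.4; in characteristic 2 all signs are immaterial.) -/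
open Classical in
/-- The power series `1 + Σ_{m≥1} (−1)^m ζ^{(p^{ms}−1)/(p^s−1)} t^{p^{ms}−1}`
in `F_p[ζ][[t]]`, where `ζ = Polynomial.X`. -/
noncomputable def lhsSeries (p s : ℕ) : PowerSeries (Polynomial (ZMod p)) :=
  PowerSeries.mk fun j =>
    if j = 0 then 1
    else if h : ∃ m, 1 ≤ m ∧ j = p ^ (m * s) - 1 then
      (-1 : Polynomial (ZMod p)) ^ h.choose *
        Polynomial.X ^ ((p ^ (h.choose * s) - 1) / (p ^ s - 1))
    else 0

open Classical in
/-- The power series `1 + Σ_{n≥1} (−1)^n C(np^s − 1, n) ζ^n t^{n(p^s−1)}`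
in `F_p[ζ][[t]]`, the binomial coefficients being reduced mod `p`. -/
noncomputable def rhsSeries (p s : ℕ) : PowerSeries (Polynomial (ZMod p)) :=
  PowerSeries.mk fun j =>
    if j = 0 then 1
    else if h : ∃ n, 1 ≤ n ∧ j = n * (p ^ s - 1) then
      (-1 : Polynomial (ZMod p)) ^ h.choose *
        ((Nat.choose (h.choose * p ^ s - 1) h.choose : ZMod p) •
          Polynomial.X ^ h.choose)
    else 0

/-!
Write `q = p ^ s`. Under `f(y) ↦ f(-ζ t^(q-1))` the two series are the images of
`I = ∑ₘ y^(1 + q + ⋯ + q^(m-1))` and `B = ∑ₙ C(nq - 1, n) yⁿ` in `𝔽_p⟦y⟧` (the signs match because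
`(-1)^(1 + q + ⋯ + q^(m-1)) = (-1)^m` in characteristic `p`), so it suffices to show `I * B = 1`.
By Frobenius `I = 1 + y I(y^q) = 1 + y I^q`. Lucas's theorem in base `q` shows that the series
`G_j = ∑ₓ C(xq + j, x) yˣ` satisfy `G_j = ∑_ρ C(j, ρ) y^ρ G_ρ(y^q)` for `j < q`, and so do the
powers `I^j`; this system has only one solution with `G_0(0) = 1`, hence `G_j = I^j`. For `j = 0`
this says `C(nq, n) ≡ 0` for `n ≥ 1`, so Pascal's rule gives `y G_(q-1) = 1 - B`, and therefore
`I B = I - y I^q = 1`.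
-/

open PowerSeries Finset

section Lucas

variable {p : ℕ} [Fact p.Prime]

theorem ZMod.natCast_choose_eq_choose_mod_mul_choose_div (n k : ℕ) :
    (n.choose k : ZMod p) = (n % p).choose (k % p) * (n / p).choose (k / p) := by
  exact_mod_cast
    (ZMod.natCast_eq_natCast_iff _ _ _).2 Choose.choose_modEq_choose_mod_mul_choose_div_nat

theorem ZMod.natCast_choose_eq_choose_mod_pow_mul_choose_div_pow (s n k : ℕ) :
    (n.choose k : ZMod p) =
      (n % p ^ s).choose (k % p ^ s) * (n / p ^ s).choose (k / p ^ s) := by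
  induction s generalizing n k with
  | zero => simp [Nat.mod_one]
  | succ s ih =>
    have hmod (x : ℕ) : x % p ^ (s + 1) % p ^ s = x % p ^ s :=
      Nat.mod_mod_of_dvd x (pow_dvd_pow p s.le_succ)
    have hdiv (x : ℕ) : x % p ^ (s + 1) / p ^ s = x / p ^ s % p := by
      rw [pow_succ, Nat.mod_mul_right_div_self]
    rw [ih, ZMod.natCast_choose_eq_choose_mod_mul_choose_div (n / p ^ s),
      ih (n % p ^ (s + 1)), hmod, hmod, hdiv, hdiv, Nat.div_div_eq_div_mul,
      Nat.div_div_eq_div_mul, ← pow_succ, mul_assoc]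

theorem ZMod.natCast_choose_mul_pow_add (s : ℕ) {j : ℕ} (hj : j < p ^ s) (n : ℕ) :
    ((n * p ^ s + j).choose n : ZMod p) = j.choose (n % p ^ s) * n.choose (n / p ^ s) := by
  rw [ZMod.natCast_choose_eq_choose_mod_pow_mul_choose_div_pow s, Nat.mul_add_mod_self_right,
    Nat.mod_eq_of_lt hj, add_comm, Nat.add_mul_div_right _ _ (NeZero.pos _),
    Nat.div_eq_of_lt hj, zero_add]

end Lucas

theorem ZMod.powerSeries_pow_eq_expand {p : ℕ} [Fact p.Prime] (s : ℕ) (f : (ZMod p)⟦X⟧) :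
    f ^ p ^ s = expand (p ^ s) (NeZero.ne _) f := by
  have hid : iterateFrobenius (ZMod p) p s = RingHom.id _ :=
    RingHom.ext fun x => by rw [iterateFrobenius_def, ZMod.pow_card_pow, RingHom.id_apply]
  rw [← MvPowerSeries.map_iterateFrobenius_expand p (Fact.out : p.Prime).ne_zero, hid,
    MvPowerSeries.map_id]
  rfl

namespace PowerSeries

variable {R : Type*} [CommRing R] {q : ℕ} [NeZero q]

theorem coeff_X_pow_mul_expand (f : R⟦X⟧) (ρ n : ℕ) :
    coeff n (X ^ ρ * expand q (NeZero.ne q) f) =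
      if ρ ≤ n ∧ q ∣ n - ρ then coeff ((n - ρ) / q) f else 0 := by
  rw [coeff_X_pow_mul', coeff_expand]
  split_ifs <;> tauto

theorem eq_of_eq_sum_X_pow_mul_expand (hq : 1 < q) (c : ℕ → ℕ → R) {N : ℕ} {F G : ℕ → R⟦X⟧}
    (hF : ∀ j < N, F j = ∑ ρ ∈ range (j + 1), X ^ ρ * expand q (NeZero.ne q) (F ρ) * C (c j ρ))
    (hG : ∀ j < N, G j = ∑ ρ ∈ range (j + 1), X ^ ρ * expand q (NeZero.ne q) (G ρ) * C (c j ρ))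
    (h0 : constantCoeff (F 0) = constantCoeff (G 0)) :
    ∀ j < N, F j = G j := by
  suffices ∀ n j, j < N → coeff n (F j) = coeff n (G j) from
    fun j hj => ext fun n => this n j hj
  intro n
  induction n using Nat.strong_induction_on with
  | _ n ih =>
    intro j hj
    rw [hF j hj, hG j hj, map_sum, map_sum]
    refine sum_congr rfl fun ρ hρ => ?_
    have hρN : ρ < N := by have := mem_range.1 hρ; omega
    simp only [coeff_mul_C, coeff_X_pow_mul_expand]
    split_ifs with h
    · congr 1
      rcases Nat.eq_zero_or_pos n with rfl | hn
      · obtain rfl : ρ = 0 := by omega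
        simpa using h0
      · exact ih _ (Nat.div_lt_of_lt_mul ((Nat.sub_le n ρ).trans_lt (by nlinarith))) ρ hρN
    · rfl

end PowerSeries

def repunit (q m : ℕ) : ℕ := ∑ i ∈ range m, q ^ i

theorem repunit_succ (q m : ℕ) : repunit q (m + 1) = q * repunit q m + 1 := geom_sum_succ

theorem repunit_mul_sub_one {q : ℕ} (hq : 1 ≤ q) (m : ℕ) : repunit q m * (q - 1) = q ^ m - 1 :=
  geom_sum_mul_of_one_le hq m

theorem pow_mul_sub_one_eq_sub_one_mul_repunit {p : ℕ} [NeZero p] (s m : ℕ) :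
    p ^ (m * s) - 1 = (p ^ s - 1) * repunit (p ^ s) m := by
  rw [pow_mul', ← repunit_mul_sub_one (NeZero.pos (p ^ s)), mul_comm]

theorem neg_one_pow_repunit (R : Type*) [CommRing R] {p : ℕ} [Fact p.Prime] [CharP R p]
    (s m : ℕ) : (-1 : R) ^ repunit (p ^ s) m = (-1) ^ m := by
  rw [repunit, ← prod_pow_eq_pow_sum]
  simp_rw [← pow_mul, neg_one_pow_char_pow R p]
  simp

section Series

variable (R : Type*) [CommRing R] (q : ℕ)

noncomputable def repunitSeries : R⟦X⟧ := mk ((Set.range (repunit q)).indicator 1)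

noncomputable def chooseSeries (j : ℕ) : R⟦X⟧ := mk fun n => ((n * q + j).choose n : R)

-- The constant coefficient is `(0 - 1).choose 0 = 1`.
noncomputable def inverseSeries : R⟦X⟧ := mk fun n => ((n * q - 1).choose n : R)

variable {R q}

theorem repunitSeries_eq_one_add_X_mul_expand [NeZero q] :
    repunitSeries R q = 1 + X * expand q (NeZero.ne q) (repunitSeries R q) := by
  ext (_ | n)
  · have h0 : 0 ∈ Set.range (repunit q) := ⟨0, rfl⟩
    simp [repunitSeries, Set.indicator_of_mem h0]
  · have key : n + 1 ∈ Set.range (repunit q) ↔ q ∣ n ∧ n / q ∈ Set.range (repunit q) := by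
      constructor
      · rintro ⟨_ | m, hm⟩
        · simp [repunit] at hm
        · rw [repunit_succ] at hm
          refine ⟨⟨repunit q m, by omega⟩, m, ?_⟩
          rw [show n = q * repunit q m by omega, Nat.mul_div_cancel_left _ (NeZero.pos q)]
      · rintro ⟨⟨k, rfl⟩, m, hm⟩
        rw [Nat.mul_div_cancel_left _ (NeZero.pos q)] at hm
        exact ⟨m + 1, by rw [repunit_succ, hm]⟩
    simp only [repunitSeries, coeff_mk, map_add, coeff_one, coeff_succ_X_mul, coeff_expand]
    by_cases h : q ∣ n
    · by_cases hm : n / q ∈ Set.range (repunit q)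
      · simp [h, Set.indicator_of_mem hm, Set.indicator_of_mem (key.2 ⟨h, hm⟩)]
      · simp [h, Set.indicator_of_notMem hm, Set.indicator_of_notMem (hm ∘ And.right ∘ key.1)]
    · simp [h, Set.indicator_of_notMem (h ∘ And.left ∘ key.1)]

end Series

section CharP

variable {p : ℕ} [Fact p.Prime] (s : ℕ)

theorem chooseSeries_eq_sum {j : ℕ} (hj : j < p ^ s) :
    chooseSeries (ZMod p) (p ^ s) j = ∑ ρ ∈ range (j + 1),
      X ^ ρ * expand (p ^ s) (NeZero.ne _) (chooseSeries (ZMod p) (p ^ s) ρ) *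
        C (j.choose ρ : ZMod p) := by
  ext n
  simp only [map_sum, coeff_mul_C, coeff_X_pow_mul_expand, chooseSeries, coeff_mk]
  rw [ZMod.natCast_choose_mul_pow_add s hj, sum_eq_single (n % p ^ s)]
  · rw [if_pos ⟨Nat.mod_le n _, Nat.dvd_sub_mod n⟩, ← Nat.div_eq_sub_mod_div,
      Nat.div_add_mod', mul_comm]
  · intro ρ hρ hne
    rw [if_neg, zero_mul]
    rintro ⟨hρn, hdvd⟩
    have hρq : ρ < p ^ s := by have := mem_range.1 hρ; omega
    exact hne (by simpa [Nat.ModEq, Nat.mod_eq_of_lt hρq] using (Nat.modEq_iff_dvd' hρn).2 hdvd)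
  · intro h
    rw [Nat.choose_eq_zero_of_lt (n := j) (by simpa using h), Nat.cast_zero, mul_zero]

theorem repunitSeries_pow_eq_sum (j : ℕ) :
    repunitSeries (ZMod p) (p ^ s) ^ j = ∑ ρ ∈ range (j + 1),
      X ^ ρ * expand (p ^ s) (NeZero.ne _) (repunitSeries (ZMod p) (p ^ s) ^ ρ) *
        C (j.choose ρ : ZMod p) := by
  conv_lhs => rw [repunitSeries_eq_one_add_X_mul_expand, add_comm, add_pow]
  simp [mul_pow, map_natCast]

theorem chooseSeries_eq_pow (hs : s ≠ 0) {j : ℕ} (hj : j < p ^ s) :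
    chooseSeries (ZMod p) (p ^ s) j = repunitSeries (ZMod p) (p ^ s) ^ j :=
  eq_of_eq_sum_X_pow_mul_expand (Nat.one_lt_pow hs (Fact.out : p.Prime).one_lt)
    (fun j ρ => (j.choose ρ : ZMod p)) (fun _ => chooseSeries_eq_sum s)
    (fun j _ => repunitSeries_pow_eq_sum s j) (by simp [chooseSeries]) j hj

theorem X_mul_chooseSeries_sub_one (hs : s ≠ 0) :
    X * chooseSeries (ZMod p) (p ^ s) (p ^ s - 1) = 1 - inverseSeries (ZMod p) (p ^ s) := by
  have hq : 0 < p ^ s := NeZero.pos _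
  ext (_ | n)
  · simp [inverseSeries]
  · have hvanish : (((n + 1) * p ^ s).choose (n + 1) : ZMod p) = 0 := by
      simpa [chooseSeries] using congr(coeff (n + 1) $(chooseSeries_eq_pow s hs hq))
    have hN : (n + 1) * p ^ s - 1 + 1 = (n + 1) * p ^ s := by
      have : p ^ s ≤ (n + 1) * p ^ s := Nat.le_mul_of_pos_left _ n.succ_pos
      omega
    have hpascal := Nat.choose_succ_succ' ((n + 1) * p ^ s - 1) n
    rw [hN] at hpascal
    have hn : n * p ^ s + (p ^ s - 1) = (n + 1) * p ^ s - 1 := by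
      rw [add_mul, one_mul]; omega
    rw [hpascal, Nat.cast_add] at hvanish
    simp only [coeff_succ_X_mul, chooseSeries, inverseSeries, coeff_mk, map_sub, coeff_one, hn,
      Nat.add_one_ne_zero, if_false]
    linear_combination hvanish

theorem repunitSeries_mul_inverseSeries (hs : s ≠ 0) :
    repunitSeries (ZMod p) (p ^ s) * inverseSeries (ZMod p) (p ^ s) = 1 := by
  have hq : 0 < p ^ s := NeZero.pos _
  have hpow : repunitSeries (ZMod p) (p ^ s) * repunitSeries (ZMod p) (p ^ s) ^ (p ^ s - 1) =
      expand (p ^ s) (NeZero.ne _) (repunitSeries (ZMod p) (p ^ s)) := by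
    rw [← pow_succ', Nat.sub_add_cancel hq, ZMod.powerSeries_pow_eq_expand]
  rw [← sub_sub_cancel 1 (inverseSeries _ _), ← X_mul_chooseSeries_sub_one s hs,
    chooseSeries_eq_pow s hs (Nat.sub_lt hq one_pos)]
  linear_combination -X * hpow + repunitSeries_eq_one_add_X_mul_expand (R := ZMod p) (q := p ^ s)

end CharP

-- `f(y) ↦ f(-ζ t^k)`, where `ζ = Polynomial.X` and `t = PowerSeries.X`.
noncomputable def zetaSubst (p k : ℕ) [NeZero k] : (ZMod p)⟦X⟧ →+* (Polynomial (ZMod p))⟦X⟧ where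
  toFun f := expand k (NeZero.ne k) (rescale (-Polynomial.X) (map Polynomial.C f))
  map_one' := by simp only [map_one]
  map_mul' := by simp only [map_mul, implies_true]
  map_zero' := by simp only [map_zero]
  map_add' := by simp only [map_add, implies_true]

section Specialization

variable {p k : ℕ} [NeZero k]

theorem coeff_zetaSubst_mul (f : (ZMod p)⟦X⟧) (n : ℕ) :
    coeff (k * n) (zetaSubst p k f) = (-Polynomial.X) ^ n * Polynomial.C (coeff n f) := by
  rw [zetaSubst, RingHom.coe_mk, MonoidHom.coe_mk, OneHom.coe_mk, coeff_expand_mul,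
    coeff_rescale, coeff_map]

theorem coeff_zetaSubst_of_not_dvd (f : (ZMod p)⟦X⟧) {j : ℕ} (h : ¬ k ∣ j) :
    coeff j (zetaSubst p k f) = 0 := by
  rw [zetaSubst, RingHom.coe_mk, MonoidHom.coe_mk, OneHom.coe_mk,
    coeff_expand_of_not_dvd _ _ _ h]

end Specialization

theorem coeff_lhsSeries_of_forall_ne {p s j : ℕ} (h : ∀ m, j ≠ p ^ (m * s) - 1) :
    coeff j (lhsSeries p s) = 0 := by
  rw [lhsSeries, coeff_mk, if_neg (by simpa using h 0), dif_neg (fun ⟨m, _, hm⟩ => h m hm)]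

theorem coeff_rhsSeries_of_not_dvd {p s j : ℕ} (h : ¬ (p ^ s - 1) ∣ j) :
    coeff j (rhsSeries p s) = 0 := by
  rw [rhsSeries, coeff_mk, if_neg (by rintro rfl; exact h (dvd_zero _)),
    dif_neg (fun ⟨n, _, hn⟩ => h ⟨n, by rw [hn, mul_comm]⟩)]

section Coefficients

variable {p s : ℕ} [Fact p.Prime] [NeZero (p ^ s - 1)]

theorem coeff_lhsSeries_sub_one_mul_repunit (m : ℕ) :
    coeff ((p ^ s - 1) * repunit (p ^ s) m) (lhsSeries p s) =
      (-1) ^ m * Polynomial.X ^ repunit (p ^ s) m := by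
  have hp := (Fact.out : p.Prime)
  have hs : 0 < s := Nat.pos_of_ne_zero fun h => NeZero.ne (p ^ s - 1) (by simp [h])
  rw [← pow_mul_sub_one_eq_sub_one_mul_repunit, lhsSeries, coeff_mk]
  rcases Nat.eq_zero_or_pos m with rfl | hm
  · simp [repunit]
  have hinj (m' : ℕ) (h : p ^ (m * s) - 1 = p ^ (m' * s) - 1) : m' = m :=
    Nat.eq_of_mul_eq_mul_right hs <| Nat.pow_right_injective hp.two_le <|
      (Nat.sub_one_cancel (pow_pos hp.pos _) (pow_pos hp.pos _) h).symm
  have hex : ∃ m', 1 ≤ m' ∧ p ^ (m * s) - 1 = p ^ (m' * s) - 1 := ⟨m, hm, rfl⟩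
  have hne : p ^ (m * s) - 1 ≠ 0 := by
    have := Nat.pow_le_pow_right hp.pos (Nat.le_mul_of_pos_left s hm)
    have := NeZero.ne (p ^ s - 1)
    omega
  rw [if_neg hne, dif_pos hex, hinj _ hex.choose_spec.2, pow_mul_sub_one_eq_sub_one_mul_repunit,
    Nat.mul_div_cancel_left _ (NeZero.pos _)]

theorem coeff_rhsSeries_mul (n : ℕ) :
    coeff (n * (p ^ s - 1)) (rhsSeries p s) =
      (-1) ^ n * (((n * p ^ s - 1).choose n : ZMod p) • Polynomial.X ^ n) := by
  rw [rhsSeries, coeff_mk]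
  rcases Nat.eq_zero_or_pos n with rfl | hn
  · simp
  have hex : ∃ n', 1 ≤ n' ∧ n * (p ^ s - 1) = n' * (p ^ s - 1) := ⟨n, hn, rfl⟩
  rw [if_neg (Nat.mul_ne_zero hn.ne' (NeZero.ne _)), dif_pos hex,
    Nat.eq_of_mul_eq_mul_right (NeZero.pos _) hex.choose_spec.2.symm]

theorem lhsSeries_eq_zetaSubst :
    lhsSeries p s = zetaSubst p (p ^ s - 1) (repunitSeries (ZMod p) (p ^ s)) := by
  ext j : 1
  by_cases hdvd : p ^ s - 1 ∣ j
  · obtain ⟨k, rfl⟩ := hdvd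
    rw [coeff_zetaSubst_mul, repunitSeries, coeff_mk]
    by_cases hk : k ∈ Set.range (repunit (p ^ s))
    · obtain ⟨m, rfl⟩ := hk
      rw [coeff_lhsSeries_sub_one_mul_repunit, Set.indicator_of_mem (Set.mem_range_self m),
        Pi.one_apply, map_one, mul_one, neg_pow (Polynomial.X : Polynomial (ZMod p)),
        neg_one_pow_repunit]
    · rw [Set.indicator_of_notMem hk, map_zero, mul_zero, coeff_lhsSeries_of_forall_ne]
      intro m hm
      rw [pow_mul_sub_one_eq_sub_one_mul_repunit] at hm
      exact hk ⟨m, (Nat.eq_of_mul_eq_mul_left (NeZero.pos _) hm).symm⟩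
  · rw [coeff_zetaSubst_of_not_dvd _ hdvd, coeff_lhsSeries_of_forall_ne]
    rintro m rfl
    exact hdvd ⟨_, pow_mul_sub_one_eq_sub_one_mul_repunit s m⟩

theorem rhsSeries_eq_zetaSubst :
    rhsSeries p s = zetaSubst p (p ^ s - 1) (inverseSeries (ZMod p) (p ^ s)) := by
  ext j : 1
  by_cases hdvd : p ^ s - 1 ∣ j
  · obtain ⟨n, rfl⟩ := hdvd
    rw [coeff_zetaSubst_mul, mul_comm, coeff_rhsSeries_mul, inverseSeries, coeff_mk,
      Polynomial.smul_eq_C_mul, neg_pow]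
    ring
  · rw [coeff_zetaSubst_of_not_dvd _ hdvd, coeff_rhsSeries_of_not_dvd hdvd]

end Coefficients

/-- Lemma 5.4 (inverse-series identity): for a prime `p` and `s ≥ 1`,
`(1 + Σ_{m≥1} (−1)^m ζ^{(p^{ms}−1)/(p^s−1)} t^{p^{ms}−1}) ·
 (1 + Σ_{n≥1} (−1)^n C(np^s − 1, n) ζ^n t^{n(p^s−1)}) = 1` in `F_p[ζ][[t]]`. -/
theorem inverse_series_identity (p : ℕ) (hp : p.Prime) (s : ℕ) (hs : 1 ≤ s) :
    lhsSeries p s * rhsSeries p s = 1 := by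
  have : Fact p.Prime := ⟨hp⟩
  have : NeZero (p ^ s - 1) := ⟨Nat.sub_ne_zero_of_lt (Nat.one_lt_pow (by omega) hp.one_lt)⟩
  rw [lhsSeries_eq_zetaSubst, rhsSeries_eq_zetaSubst, ← map_mul,
    repunitSeries_mul_inverseSeries s (by omega), map_one]
end
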